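/- arXiv:1906.07323 — 2 statements merged into one kernel-verified Lean document; each statement's English description precedes it below -/
import Mathlib

section
/- Let f be a continuous self-map of a compact metric space X and let Ψ = {ψ_n}_{n≥1} be a super-additive sequence of continuous potentials on X. Then for every integer k ≥ 0, (1/2^{k+1}) P(f^{2^{k+1}}, ψ_{2^{k+1}}) ≥ (1/2^k) P(f^{2^k}, ψ_{2^k}), where P(g,φ) denotes the classical topological pressure of the single continuous function φ for the map g. -/
open MeasureTheory Filter Topology Set

section Defs

variable {X : Type*} [MetricSpace X]

/-- `E` is an `(n, ε)`-separated set for the map `f`. -/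
def IsSepSet (f : X → X) (n : ℕ) (ε : ℝ) (E : Finset X) : Prop :=
  ∀ x ∈ E, ∀ y ∈ E, x ≠ y → ∃ i < n, ε < dist (f^[i] x) (f^[i] y)

/-- Supremum of `∑_{x ∈ E} exp (ψ x)` over `(n,ε)`-separated subsets `E` of `Λ`. -/
noncomputable def sepSum (f : X → X) (Λ : Set X) (ψ : X → ℝ) (n : ℕ) (ε : ℝ) : ℝ :=
  sSup {s : ℝ | ∃ E : Finset X, ↑E ⊆ Λ ∧ IsSepSet f n ε E ∧ s = ∑ x ∈ E, Real.exp (ψ x)}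

/-- Sub-additive topological pressure of the sequence of potentials `Φ` for `f` on `Λ`,
defined via `(n,ε)`-separated sets; the limit as `ε → 0` is realized as the supremum
over `ε > 0` since the quantity is monotone in `ε`. -/
noncomputable def subPressure (f : X → X) (Λ : Set X) (Φ : ℕ → X → ℝ) : ℝ :=
  ⨆ ε : {ε : ℝ // 0 < ε},
    Filter.limsup (fun n : ℕ => Real.log (sepSum f Λ (Φ n) n ε.1) / n) Filter.atTop

/-- Classical topological pressure of the single potential `φ` for `f` on `Λ`. -/
noncomputable def pressure (f : X → X) (Λ : Set X) (φ : X → ℝ) : ℝ :=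
  subPressure f Λ (fun n x => ∑ i ∈ Finset.range n, φ (f^[i] x))

variable [MeasurableSpace X]

/-- Entropy of a finite partition. -/
noncomputable def partEnt (μ : Measure X) (P : Finset (Set X)) : ℝ :=
  ∑ A ∈ P, Real.negMulLog (μ A).toReal

/-- The dynamical refinement `P ∨ f⁻¹ P ∨ ⋯ ∨ f⁻⁽ⁿ⁻¹⁾ P`. -/
noncomputable def dynJoin (f : X → X) (P : Finset (Set X)) (n : ℕ) : Finset (Set X) := by
  classical
  exact (Finset.univ : Finset (Fin n → {A // A ∈ P})).image
    fun a => ⋂ i : Fin n, f^[(i : ℕ)] ⁻¹' ((a i : Set X))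

/-- `P` is a finite measurable partition mod `μ`. -/
def IsMeasPartitionMod (μ : Measure X) (P : Finset (Set X)) : Prop :=
  (∀ A ∈ P, MeasurableSet A) ∧ (⋃ A ∈ P, A) = Set.univ ∧
    ∀ A ∈ P, ∀ B ∈ P, A ≠ B → μ (A ∩ B) = 0

/-- Measure-theoretic (Kolmogorov–Sinai) entropy of `f` with respect to `μ`. -/
noncomputable def mEntropy (f : X → X) (μ : Measure X) : ℝ :=
  sSup {h : ℝ | ∃ P : Finset (Set X), IsMeasPartitionMod μ P ∧
    h = ⨅ n : ℕ, partEnt μ (dynJoin f P (n + 1)) / (n + 1)}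

/-- `F_*(Ψ,μ) = lim_n (1/n) ∫ ψ_n dμ`; for a super-additive sequence `Ψ` and an invariant
measure `μ` this limit exists and equals the supremum `sup_n (1/n) ∫ ψ_n dμ`. -/
noncomputable def Fstar (Ψ : ℕ → X → ℝ) (μ : Measure X) : ℝ :=
  ⨆ n : {n : ℕ // 0 < n}, (∫ x, Ψ n.1 x ∂μ) / n.1

/-- Super-additive topological pressure of the sequence `Ψ` for `f` on `Λ`, defined via the
variational principle. -/
noncomputable def supPressureVar (f : X → X) (Λ : Set X) (Ψ : ℕ → X → ℝ) : ℝ :=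
  sSup {p : ℝ | ∃ μ : Measure X, IsProbabilityMeasure μ ∧ μ.map f = μ ∧ μ Λ = 1 ∧
    p = mEntropy f μ + Fstar Ψ μ}

end Defs

section AuxProof

open Filter Metric

variable {X : Type*} [MetricSpace X]

private lemma sepSet_zero_mem (f : X → X) (ψ : X → ℝ) (n : ℕ) (ε : ℝ) :
    (0:ℝ) ∈ {s : ℝ | ∃ E : Finset X, ↑E ⊆ (Set.univ : Set X) ∧ IsSepSet f n ε E ∧
      s = ∑ x ∈ E, Real.exp (ψ x)} :=
  ⟨∅, by simp, fun x hx => absurd hx (Finset.notMem_empty x), by simp⟩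

private lemma card_le_of_sepSet {f : X → X} {ε : ℝ} (t : Finset X)
    (ht : ∀ x : X, ∃ c ∈ t, dist x c < ε / 2) {n : ℕ} {E : Finset X}
    (hE : IsSepSet f n ε E) : E.card ≤ t.card ^ n := by
  classical
  choose c hct hcd using ht
  set F : X → (Fin n → {a // a ∈ t}) := fun x i => ⟨c (f^[(i:ℕ)] x), hct _⟩ with hF
  have hinj : Set.InjOn F ↑E := by
    intro x hx y hy hxy
    by_contra hee
    obtain ⟨i, hi, hd⟩ := hE x hx y hy hee
    have h1 := congrFun hxy ⟨i, hi⟩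
    have hcc : c (f^[i] x) = c (f^[i] y) := congrArg Subtype.val h1
    have d1 := hcd (f^[i] x)
    have d2 := hcd (f^[i] y)
    rw [hcc] at d1
    have : dist (f^[i] x) (f^[i] y) < ε := by
      calc dist (f^[i] x) (f^[i] y)
          ≤ dist (f^[i] x) (c (f^[i] y)) + dist (f^[i] y) (c (f^[i] y)) :=
            dist_triangle_right _ _ _
        _ < ε/2 + ε/2 := add_lt_add d1 d2
        _ = ε := by ring
    linarith
  have := Finset.card_le_card_of_injOn F (fun a _ => Finset.mem_univ (F a)) hinj
  simpa [Finset.card_univ, Fintype.card_fun, Fintype.card_coe] using this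

private lemma sepSum_compare (f₁ f₂ : X → X) (ψ₁ ψ₂ : X → ℝ) {n₁ n₂ : ℕ} {ε₁ ε₂ : ℝ} (c : ℝ)
    (hsep : ∀ E : Finset X, IsSepSet f₁ n₁ ε₁ E → IsSepSet f₂ n₂ ε₂ E)
    (hpot : ∀ x, ψ₁ x ≤ c + ψ₂ x)
    (hbdd : BddAbove {s : ℝ | ∃ E : Finset X, ↑E ⊆ (Set.univ : Set X) ∧ IsSepSet f₂ n₂ ε₂ E ∧
      s = ∑ x ∈ E, Real.exp (ψ₂ x)}) :
    sepSum f₁ Set.univ ψ₁ n₁ ε₁ ≤ Real.exp c * sepSum f₂ Set.univ ψ₂ n₂ ε₂ := by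
  unfold sepSum
  refine csSup_le ⟨0, sepSet_zero_mem f₁ ψ₁ n₁ ε₁⟩ ?_
  rintro s ⟨E, -, hE, rfl⟩
  have h1 : ∑ x ∈ E, Real.exp (ψ₂ x) ≤
      sSup {s : ℝ | ∃ E : Finset X, ↑E ⊆ (Set.univ : Set X) ∧ IsSepSet f₂ n₂ ε₂ E ∧
        s = ∑ x ∈ E, Real.exp (ψ₂ x)} :=
    le_csSup hbdd ⟨E, by simp, hsep E hE, rfl⟩
  calc ∑ x ∈ E, Real.exp (ψ₁ x)
      ≤ ∑ x ∈ E, Real.exp c * Real.exp (ψ₂ x) := by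
        refine Finset.sum_le_sum fun x _ => ?_
        rw [← Real.exp_add]
        exact Real.exp_le_exp.2 (hpot x)
    _ = Real.exp c * ∑ x ∈ E, Real.exp (ψ₂ x) := (Finset.mul_sum _ _ _).symm
    _ ≤ _ := mul_le_mul_of_nonneg_left h1 (Real.exp_nonneg c)

private lemma sepSum_facts [CompactSpace X] [Nonempty X]
    (F : X → X) (Φ : ℕ → X → ℝ) (C : ℝ) (hC : 0 ≤ C) (hΦ : ∀ (n : ℕ) (x : X), |Φ n x| ≤ n * C)
    {ε : ℝ} (hε : 0 < ε) :
    ∃ D : ℝ, 0 ≤ D ∧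
      (∀ n, BddAbove {s : ℝ | ∃ E : Finset X, ↑E ⊆ (Set.univ : Set X) ∧ IsSepSet F n ε E ∧
        s = ∑ x ∈ E, Real.exp (Φ n x)}) ∧
      (∀ n, 0 < sepSum F Set.univ (Φ n) n ε) ∧
      (∀ n, |Real.log (sepSum F Set.univ (Φ n) n ε) / n| ≤ D) := by
  classical
  obtain ⟨t₀, -, ht₀fin, ht₀cov⟩ :=
    finite_cover_balls_of_compact (isCompact_univ (X := X)) (by positivity : (0:ℝ) < ε/2)
  set t := ht₀fin.toFinset with htdef
  have htc : ∀ x : X, ∃ c ∈ t, dist x c < ε/2 := by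
    intro x
    have hx := ht₀cov (Set.mem_univ x)
    simp only [Set.mem_iUnion] at hx
    obtain ⟨c, hc, hxc⟩ := hx
    exact ⟨c, ht₀fin.mem_toFinset.2 hc, Metric.mem_ball.1 hxc⟩
  set x₀ : X := Classical.arbitrary X
  have hK1 : 1 ≤ t.card := by
    obtain ⟨c, hc, -⟩ := htc x₀
    exact Finset.card_pos.2 ⟨c, hc⟩
  have hKR : (1:ℝ) ≤ (t.card : ℝ) := by exact_mod_cast hK1
  have hub : ∀ (n : ℕ), ∀ s ∈ {s : ℝ | ∃ E : Finset X, ↑E ⊆ (Set.univ : Set X) ∧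
      IsSepSet F n ε E ∧ s = ∑ x ∈ E, Real.exp (Φ n x)},
      s ≤ (t.card : ℝ)^n * Real.exp (n*C) := by
    rintro n s ⟨E, -, hE, rfl⟩
    have hcard := card_le_of_sepSet t htc hE
    calc ∑ x ∈ E, Real.exp (Φ n x)
        ≤ ∑ x ∈ E, Real.exp ((n:ℝ)*C) :=
          Finset.sum_le_sum fun x _ => Real.exp_le_exp.2 ((abs_le.1 (hΦ n x)).2)
      _ = (E.card : ℝ) * Real.exp ((n:ℝ)*C) := by rw [Finset.sum_const, nsmul_eq_mul]
      _ ≤ (t.card : ℝ)^n * Real.exp ((n:ℝ)*C) := by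
          have hc2 : (E.card : ℝ) ≤ (t.card : ℝ)^n := by exact_mod_cast hcard
          exact mul_le_mul_of_nonneg_right hc2 (Real.exp_nonneg _)
  have hbdd : ∀ n, BddAbove {s : ℝ | ∃ E : Finset X, ↑E ⊆ (Set.univ : Set X) ∧ IsSepSet F n ε E ∧
      s = ∑ x ∈ E, Real.exp (Φ n x)} := fun n => ⟨_, hub n⟩
  have hlow : ∀ n : ℕ, Real.exp (-((n:ℝ)*C)) ≤ sepSum F Set.univ (Φ n) n ε := by
    intro n
    have hmem : Real.exp (Φ n x₀) ∈ {s : ℝ | ∃ E : Finset X, ↑E ⊆ (Set.univ : Set X) ∧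
        IsSepSet F n ε E ∧ s = ∑ x ∈ E, Real.exp (Φ n x)} := by
      refine ⟨{x₀}, by simp, ?_, by simp⟩
      intro x hx y hy hxy
      rw [Finset.mem_singleton] at hx hy
      exact absurd (hx.trans hy.symm) hxy
    have h1 : Real.exp (Φ n x₀) ≤ sepSum F Set.univ (Φ n) n ε := le_csSup (hbdd n) hmem
    have h2 : -((n:ℝ)*C) ≤ Φ n x₀ := (abs_le.1 (hΦ n x₀)).1
    exact le_trans (Real.exp_le_exp.2 h2) h1
  have hpos : ∀ n, 0 < sepSum F Set.univ (Φ n) n ε :=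
    fun n => lt_of_lt_of_le (Real.exp_pos _) (hlow n)
  have hup : ∀ n : ℕ, sepSum F Set.univ (Φ n) n ε ≤ (t.card : ℝ)^n * Real.exp ((n:ℝ)*C) :=
    fun n => csSup_le ⟨0, sepSet_zero_mem F (Φ n) n ε⟩ (hub n)
  have hlogK : 0 ≤ Real.log t.card := Real.log_nonneg hKR
  refine ⟨C + Real.log t.card, by linarith, hbdd, hpos, ?_⟩
  intro n
  rcases Nat.eq_zero_or_pos n with rfl | hn
  · simp; linarith
  have hn0 : (0:ℝ) < n := by exact_mod_cast hn
  set D := C + Real.log t.card with hD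
  have hupper : Real.log (sepSum F Set.univ (Φ n) n ε) ≤ (n:ℝ) * D := by
    calc Real.log (sepSum F Set.univ (Φ n) n ε)
        ≤ Real.log ((t.card : ℝ)^n * Real.exp ((n:ℝ)*C)) := Real.log_le_log (hpos n) (hup n)
      _ = (n:ℝ) * Real.log t.card + (n:ℝ)*C := by
          rw [Real.log_mul (pow_ne_zero _ (by linarith)) (Real.exp_ne_zero _),
            Real.log_pow, Real.log_exp]
      _ = (n:ℝ) * D := by rw [hD]; ring
  have hlower : -((n:ℝ) * D) ≤ Real.log (sepSum F Set.univ (Φ n) n ε) := by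
    have h1 : -((n:ℝ)*C) ≤ Real.log (sepSum F Set.univ (Φ n) n ε) := by
      have := Real.log_le_log (Real.exp_pos _) (hlow n)
      rwa [Real.log_exp] at this
    have : -((n:ℝ)*D) ≤ -((n:ℝ)*C) := by
      have : (n:ℝ)*C ≤ (n:ℝ)*D := by
        apply mul_le_mul_of_nonneg_left _ (le_of_lt hn0)
        rw [hD]; linarith
      linarith
    linarith
  rw [abs_div, abs_of_pos hn0, div_le_iff₀ hn0]
  refine abs_le.2 ⟨by linarith [mul_comm (n:ℝ) D], by linarith [mul_comm (n:ℝ) D]⟩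

private lemma pressure_of_isEmpty [IsEmpty X] (F : X → X) (ψ : X → ℝ) :
    pressure F Set.univ ψ = 0 := by
  have hset : ∀ (ψ' : X → ℝ) (n : ℕ) (ε : ℝ),
      {s : ℝ | ∃ E : Finset X, ↑E ⊆ (Set.univ : Set X) ∧ IsSepSet F n ε E ∧
        s = ∑ x ∈ E, Real.exp (ψ' x)} = {0} := by
    intro ψ' n ε
    ext s
    simp only [Set.mem_setOf_eq, Set.mem_singleton_iff]
    constructor
    · rintro ⟨E, -, -, rfl⟩
      rw [Finset.eq_empty_of_forall_notMem (fun x _ => isEmptyElim x : ∀ x, x ∉ E), Finset.sum_empty]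
    · rintro rfl
      exact ⟨∅, by simp, fun x hx => absurd hx (Finset.notMem_empty x), by simp⟩
  unfold pressure subPressure sepSum
  have hl : ∀ ε : {ε : ℝ // 0 < ε},
      Filter.limsup (fun n : ℕ => Real.log
        (sSup {s : ℝ | ∃ E : Finset X, ↑E ⊆ (Set.univ : Set X) ∧ IsSepSet F n ε.1 E ∧
          s = ∑ x ∈ E, Real.exp (∑ i ∈ Finset.range n, ψ (F^[i] x))}) / n) Filter.atTop = 0 := by
    intro ε
    have he : (fun n : ℕ => Real.log
        (sSup {s : ℝ | ∃ E : Finset X, ↑E ⊆ (Set.univ : Set X) ∧ IsSepSet F n ε.1 E ∧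
          s = ∑ x ∈ E, Real.exp (∑ i ∈ Finset.range n, ψ (F^[i] x))}) / n)
        = fun _ : ℕ => (0:ℝ) := by
      funext n
      rw [hset, csSup_singleton, Real.log_zero, zero_div]
    rw [he, limsup_const]
  simp only [hl]
  exact ciSup_const

private lemma pressure_double [CompactSpace X]
    (g h : X → X) (hg : Continuous g) (hgh : ∀ (i : ℕ) (x : X), h^[i] x = g^[2*i] x)
    (φ χ : X → ℝ) (hφ : Continuous φ) (hχ : Continuous χ)
    (hsub : ∀ x, φ x + φ (g x) ≤ χ x) :
    pressure g Set.univ φ ≤ pressure h Set.univ χ / 2 := by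
  rcases isEmpty_or_nonempty X with hX | hX
  · rw [pressure_of_isEmpty, pressure_of_isEmpty]; norm_num
  classical
  obtain ⟨C₁, hC₁⟩ := isCompact_univ.exists_bound_of_continuousOn hφ.continuousOn
  obtain ⟨C₂, hC₂⟩ := isCompact_univ.exists_bound_of_continuousOn hχ.continuousOn
  set C : ℝ := max 0 (max C₁ C₂) with hCdef
  have hC0 : 0 ≤ C := le_max_left _ _
  have hφC : ∀ x, |φ x| ≤ C := fun x => by
    have := hC₁ x (Set.mem_univ x)
    rw [Real.norm_eq_abs] at this
    exact this.trans ((le_max_left _ _).trans (le_max_right _ _))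
  have hχC : ∀ x, |χ x| ≤ C := fun x => by
    have := hC₂ x (Set.mem_univ x)
    rw [Real.norm_eq_abs] at this
    exact this.trans ((le_max_right _ _).trans (le_max_right _ _))
  set Sg : ℕ → X → ℝ := fun n x => ∑ i ∈ Finset.range n, φ (g^[i] x) with hSg
  set Sh : ℕ → X → ℝ := fun n x => ∑ i ∈ Finset.range n, χ (h^[i] x) with hSh
  have hSgC : ∀ (n : ℕ) (x : X), |Sg n x| ≤ n * C := by
    intro n x
    calc |Sg n x| ≤ ∑ i ∈ Finset.range n, |φ (g^[i] x)| := Finset.abs_sum_le_sum_abs _ _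
      _ ≤ ∑ _i ∈ Finset.range n, C := Finset.sum_le_sum fun i _ => hφC _
      _ = n * C := by rw [Finset.sum_const, Finset.card_range, nsmul_eq_mul]
  have hShC : ∀ (n : ℕ) (x : X), |Sh n x| ≤ n * C := by
    intro n x
    calc |Sh n x| ≤ ∑ i ∈ Finset.range n, |χ (h^[i] x)| := Finset.abs_sum_le_sum_abs _ _
      _ ≤ ∑ _i ∈ Finset.range n, C := Finset.sum_le_sum fun i _ => hχC _
      _ = n * C := by rw [Finset.sum_const, Finset.card_range, nsmul_eq_mul]
  have hg2 : ∀ (i : ℕ) (x : X), g^[2*i+1] x = g (h^[i] x) := by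
    intro i x
    rw [hgh, ← Function.iterate_succ_apply' g (2*i) x]
  have hSgSh : ∀ (n : ℕ) (x : X), Sg (2*n) x ≤ Sh n x := by
    intro n x
    induction n with
    | zero => simp [hSg, hSh]
    | succ n ih =>
      have e1 : Sg (2*(n+1)) x = Sg (2*n) x + φ (g^[2*n] x) + φ (g^[2*n+1] x) := by
        simp only [hSg]
        rw [show 2*(n+1) = (2*n+1)+1 by ring, Finset.sum_range_succ, Finset.sum_range_succ]
      have e2 : Sh (n+1) x = Sh n x + χ (h^[n] x) := by
        simp only [hSh]; rw [Finset.sum_range_succ]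
      have e3 : φ (g^[2*n] x) + φ (g^[2*n+1] x) ≤ χ (h^[n] x) := by
        rw [hg2 n x, ← hgh n x]
        exact hsub (h^[n] x)
      rw [e1, e2]; linarith
  have hpotGH : ∀ (m : ℕ) (x : X), Sg m x ≤ C + Sh ((m+1)/2) x := by
    intro m x
    rcases Nat.even_or_odd m with ⟨n, hn⟩ | ⟨n, hn⟩
    · have hm2 : (m+1)/2 = n := by omega
      have h1 : Sg m x ≤ Sh n x := by
        rw [show m = 2*n by omega]; exact hSgSh n x
      rw [hm2]; linarith
    · have hm2 : (m+1)/2 = n+1 := by omega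
      have h1 : Sg (m+1) x = Sg m x + φ (g^[m] x) := by
        simp only [hSg]; rw [Finset.sum_range_succ]
      have h2 : Sg (m+1) x ≤ Sh (n+1) x := by
        rw [show m+1 = 2*(n+1) by omega]; exact hSgSh (n+1) x
      have h3 : -C ≤ φ (g^[m] x) := (abs_le.1 (hφC _)).1
      rw [hm2]; linarith
  have hpotHG : ∀ (N : ℕ) (x : X), Sh N x ≤ 3*(N:ℝ)*C + Sg (2*N) x := by
    intro N x
    have h1 : Sh N x ≤ (N:ℝ) * C := (abs_le.1 (hShC N x)).2
    have h2 : -(((2*N : ℕ):ℝ) * C) ≤ Sg (2*N) x := (abs_le.1 (hSgC (2*N) x)).1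
    push_cast at h2
    linarith
  have hsep2 : ∀ (ρ : ℝ) (N : ℕ) (E : Finset X), IsSepSet h N ρ E → IsSepSet g (2*N) ρ E := by
    intro ρ N E hE x hx y hy hxy
    obtain ⟨i, hi, hd⟩ := hE x hx y hy hxy
    refine ⟨2*i, by omega, ?_⟩
    rwa [hgh, hgh] at hd
  set Lg : {ε : ℝ // 0 < ε} → ℝ := fun ε =>
    Filter.limsup (fun n : ℕ => Real.log (sepSum g Set.univ (Sg n) n ε.1) / n) Filter.atTop
    with hLgdef
  set Lh : {ε : ℝ // 0 < ε} → ℝ := fun ε =>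
    Filter.limsup (fun n : ℕ => Real.log (sepSum h Set.univ (Sh n) n ε.1) / n) Filter.atTop
    with hLhdef
  have hPg : pressure g Set.univ φ = ⨆ ε, Lg ε := rfl
  have hPh : pressure h Set.univ χ = ⨆ ε, Lh ε := rfl
  -- main inequality for the bounded case
  have main : ∀ ε : {ε : ℝ // 0 < ε}, ∃ δ : {ε : ℝ // 0 < ε}, Lg ε ≤ Lh δ / 2 := by
    intro ε
    obtain ⟨δ₀, hδ₀, hδ₀c⟩ := Metric.uniformContinuous_iff.1
      (CompactSpace.uniformContinuous_of_continuous hg) ε.1 ε.2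
    refine ⟨⟨min (δ₀/2) ε.1, lt_min (by linarith) ε.2⟩, ?_⟩
    set δ : {ε : ℝ // 0 < ε} := ⟨min (δ₀/2) ε.1, lt_min (by linarith) ε.2⟩ with hδdef
    have hδε : δ.1 ≤ ε.1 := min_le_right _ _
    have hδc : ∀ a b : X, dist a b ≤ δ.1 → dist (g a) (g b) ≤ ε.1 := by
      intro a b hab
      have : dist a b < δ₀ := lt_of_le_of_lt (hab.trans (min_le_left _ _)) (by linarith)
      exact le_of_lt (hδ₀c this)
    obtain ⟨Dg, hDg0, hbddg, hposg, hug⟩ := sepSum_facts g Sg C hC0 hSgC ε.2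
    obtain ⟨Dh, hDh0, hbddh, hposh, huh⟩ := sepSum_facts h Sh C hC0 hShC δ.2
    set u : ℕ → ℝ := fun N => Real.log (sepSum h Set.univ (Sh N) N δ.1) / N with hudef
    set v : ℕ → ℝ := fun m => Real.log (sepSum g Set.univ (Sg m) m ε.1) / m with hvdef
    have hsep1 : ∀ (m : ℕ) (E : Finset X), IsSepSet g m ε.1 E → IsSepSet h ((m+1)/2) δ.1 E := by
      intro m E hE x hx y hy hxy
      obtain ⟨i, hi, hd⟩ := hE x hx y hy hxy
      refine ⟨i/2, by omega, ?_⟩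
      rcases Nat.even_or_odd i with ⟨q, hq⟩ | ⟨q, hq⟩
      · have hiq : i/2 = q := by omega
        rw [hiq, hgh, hgh, show 2*q = i by omega]
        exact lt_of_le_of_lt hδε hd
      · have hiq : i/2 = q := by omega
        rw [hiq]
        by_contra hle
        push_neg at hle
        have hcc := hδc _ _ hle
        rw [← hg2 q x, ← hg2 q y, show 2*q+1 = i by omega] at hcc
        linarith
    have hkey : ∀ m : ℕ, 1 ≤ m → v m ≤ (C + (((m+1)/2 : ℕ) : ℝ) * u ((m+1)/2)) / m := by
      intro m hm
      set N := (m+1)/2 with hN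
      have hN1 : 1 ≤ N := by omega
      have hss : sepSum g Set.univ (Sg m) m ε.1 ≤
          Real.exp C * sepSum h Set.univ (Sh N) N δ.1 :=
        sepSum_compare g h (Sg m) (Sh N) C (hsep1 m) (hpotGH m) (hbddh N)
      have hlog : Real.log (sepSum g Set.univ (Sg m) m ε.1) ≤
          C + Real.log (sepSum h Set.univ (Sh N) N δ.1) := by
        calc Real.log (sepSum g Set.univ (Sg m) m ε.1)
            ≤ Real.log (Real.exp C * sepSum h Set.univ (Sh N) N δ.1) :=
              Real.log_le_log (hposg m) hss
          _ = C + Real.log (sepSum h Set.univ (Sh N) N δ.1) := by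
              rw [Real.log_mul (Real.exp_ne_zero C) (ne_of_gt (hposh N)), Real.log_exp]
      have hNne : ((N:ℝ)) ≠ 0 := by positivity
      have hNu : Real.log (sepSum h Set.univ (Sh N) N δ.1) = (N:ℝ) * u N := by
        simp only [hudef]
        field_simp
      rw [hNu] at hlog
      have hm0 : (0:ℝ) < m := by exact_mod_cast hm
      simp only [hvdef]
      exact (div_le_div_iff_of_pos_right hm0).2 hlog
    have hu_bd : IsBoundedUnder (· ≤ ·) atTop u :=
      isBoundedUnder_of ⟨Dh, fun N => (abs_le.1 (huh N)).2⟩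
    have hv_cb : IsCoboundedUnder (· ≤ ·) atTop v :=
      (isBoundedUnder_of ⟨-Dg, fun m => (abs_le.1 (hug m)).1⟩ :
        IsBoundedUnder (· ≥ ·) atTop v).isCoboundedUnder_le
    set A := Filter.limsup u Filter.atTop with hA
    have hNt : Tendsto (fun m : ℕ => (m+1)/2) atTop atTop :=
      tendsto_atTop_atTop.2 fun b => ⟨2*b, fun a ha => by omega⟩
    show Lg ε ≤ A / 2
    refine le_of_forall_pos_le_add fun ρ hρ => ?_
    have hηpos : 0 < ρ/2 := by positivity
    have h1 : ∀ᶠ N in atTop, u N < A + ρ/2 :=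
      eventually_lt_of_limsup_lt (by rw [← hA]; linarith) hu_bd
    have h2 : ∀ᶠ m in atTop, u ((m+1)/2) < A + ρ/2 := hNt.eventually h1
    set M := C + |A + ρ/2|/2 with hM
    have h3 : ∀ᶠ m : ℕ in atTop, M / m < ρ/4 :=
      (tendsto_const_div_atTop_nhds_zero_nat M).eventually_lt_const (by positivity)
    have h4 : ∀ᶠ m in atTop, v m ≤ A/2 + ρ := by
      filter_upwards [h2, h3, eventually_ge_atTop 1] with m hu2 hM3 hm1
      have hm0 : (0:ℝ) < m := by exact_mod_cast hm1
      set N := (m+1)/2 with hN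
      have key := hkey m hm1
      have hr1 : (m:ℝ) ≤ 2*(N:ℝ) := by
        have : m ≤ 2*N := by omega
        exact_mod_cast this
      have hr2 : 2*(N:ℝ) ≤ (m:ℝ)+1 := by
        have : 2*N ≤ m+1 := by omega
        exact_mod_cast this
      set a := A + ρ/2 with ha
      have e0 : (N:ℝ) * u N ≤ (N:ℝ) * a :=
        mul_le_mul_of_nonneg_left (le_of_lt hu2) (Nat.cast_nonneg N)
      have e1 : (2*(N:ℝ) - m) * a ≤ |a| := by
        calc (2*(N:ℝ) - m) * a ≤ (2*(N:ℝ) - m) * |a| :=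
              mul_le_mul_of_nonneg_left (le_abs_self a) (by linarith)
          _ ≤ 1 * |a| := mul_le_mul_of_nonneg_right (by linarith) (abs_nonneg a)
          _ = |a| := one_mul _
      have e3 : (C + (N:ℝ) * u N)/m ≤ (C + (N:ℝ)*a)/m :=
        (div_le_div_iff_of_pos_right hm0).2 (by linarith)
      have e4 : (C + (N:ℝ)*a)/m ≤ a/2 + M/m := by
        rw [div_le_iff₀ hm0, add_mul, div_mul_cancel₀ _ (ne_of_gt hm0), hM]
        have hexp : a/2*(m:ℝ) + (C + |a|/2) - (C + (N:ℝ)*a) = (|a| - (2*(N:ℝ) - m)*a)/2 := by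
          ring
        clear_value a M N A C
        linarith [e1, hexp]
      have e5 : v m ≤ a/2 + ρ/4 := by
        calc v m ≤ (C + (N:ℝ) * u N)/m := key
          _ ≤ (C + (N:ℝ)*a)/m := e3
          _ ≤ a/2 + M/m := e4
          _ ≤ a/2 + ρ/4 := by linarith
      rw [ha] at e5
      linarith
    exact limsup_le_of_le hv_cb h4
  -- reverse inequality, used in the unbounded case
  have rev : ∀ δ : {ε : ℝ // 0 < ε}, Lh δ ≤ 3*C + 2 * Lg δ := by
    intro δ
    obtain ⟨Dg, hDg0, hbddg, hposg, hug⟩ := sepSum_facts g Sg C hC0 hSgC δ.2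
    obtain ⟨Dh, hDh0, hbddh, hposh, huh⟩ := sepSum_facts h Sh C hC0 hShC δ.2
    set u : ℕ → ℝ := fun N => Real.log (sepSum h Set.univ (Sh N) N δ.1) / N with hudef
    set v : ℕ → ℝ := fun m => Real.log (sepSum g Set.univ (Sg m) m δ.1) / m with hvdef
    have hv_bd : IsBoundedUnder (· ≤ ·) atTop v :=
      isBoundedUnder_of ⟨Dg, fun m => (abs_le.1 (hug m)).2⟩
    have hu_cb : IsCoboundedUnder (· ≤ ·) atTop u :=
      (isBoundedUnder_of ⟨-Dh, fun N => (abs_le.1 (huh N)).1⟩ :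
        IsBoundedUnder (· ≥ ·) atTop u).isCoboundedUnder_le
    have hkey : ∀ N : ℕ, 1 ≤ N → u N ≤ 3*C + 2 * v (2*N) := by
      intro N hN
      have hss : sepSum h Set.univ (Sh N) N δ.1 ≤
          Real.exp (3*(N:ℝ)*C) * sepSum g Set.univ (Sg (2*N)) (2*N) δ.1 :=
        sepSum_compare h g (Sh N) (Sg (2*N)) (3*(N:ℝ)*C) (hsep2 δ.1 N) (hpotHG N)
          (hbddg (2*N))
      have hN0 : (0:ℝ) < N := by exact_mod_cast hN
      have hlog : Real.log (sepSum h Set.univ (Sh N) N δ.1) ≤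
          3*(N:ℝ)*C + Real.log (sepSum g Set.univ (Sg (2*N)) (2*N) δ.1) := by
        calc Real.log (sepSum h Set.univ (Sh N) N δ.1)
            ≤ Real.log (Real.exp (3*(N:ℝ)*C) * sepSum g Set.univ (Sg (2*N)) (2*N) δ.1) :=
              Real.log_le_log (hposh N) hss
          _ = _ := by
              rw [Real.log_mul (Real.exp_ne_zero _) (ne_of_gt (hposg (2*N))), Real.log_exp]
      have hvN : Real.log (sepSum g Set.univ (Sg (2*N)) (2*N) δ.1) = 2*(N:ℝ) * v (2*N) := by
        simp only [hvdef]
        push_cast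
        field_simp
      rw [hvN] at hlog
      simp only [hudef]
      rw [div_le_iff₀ hN0]
      nlinarith [hlog]
    refine le_of_forall_pos_le_add fun ρ hρ => ?_
    set B := Filter.limsup v Filter.atTop with hB
    have h1 : ∀ᶠ m in atTop, v m < B + ρ/4 :=
      eventually_lt_of_limsup_lt (by rw [← hB]; linarith) hv_bd
    have hNt : Tendsto (fun N : ℕ => 2*N) atTop atTop :=
      tendsto_atTop_atTop.2 fun b => ⟨b, fun a ha => by omega⟩
    have h2 : ∀ᶠ N in atTop, u N ≤ 3*C + 2*B + ρ := by
      filter_upwards [hNt.eventually h1, eventually_ge_atTop 1] with N hvN hN1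
      have := hkey N hN1
      linarith
    have h3 : Filter.limsup u Filter.atTop ≤ 3*C + 2*B + ρ := limsup_le_of_le hu_cb h2
    show Lh δ ≤ 3*C + 2 * B + ρ
    exact h3
  rw [hPg, hPh]
  by_cases hBdd : BddAbove (Set.range fun δ : {ε : ℝ // 0 < ε} => Lh δ)
  · haveI : Nonempty {ε : ℝ // 0 < ε} := ⟨⟨1, one_pos⟩⟩
    refine ciSup_le fun ε => ?_
    obtain ⟨δ, hδ⟩ := main ε
    refine hδ.trans ?_
    have := le_ciSup hBdd δ
    linarith
  · have h1 : (⨆ δ, Lh δ) = 0 := Real.iSup_of_not_bddAbove hBdd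
    have h2 : (⨆ ε, Lg ε) = 0 := by
      apply Real.iSup_of_not_bddAbove
      rintro ⟨b, hb⟩
      apply hBdd
      refine ⟨3*C + 2*b, ?_⟩
      rintro x ⟨δ, rfl⟩
      have hrev := rev δ
      have hLgb : Lg δ ≤ b := hb ⟨δ, rfl⟩
      linarith
    rw [h1, h2]
    norm_num

end AuxProof

/-- For a continuous self-map `f` of a compact metric space `X` and a
super-additive sequence `Ψ = {ψ_n}` of continuous potentials, for every `k ≥ 0`,
`(1/2^{k+1}) P(f^{2^{k+1}}, ψ_{2^{k+1}}) ≥ (1/2^k) P(f^{2^k}, ψ_{2^k})`. -/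
theorem stmt3 {X : Type*} [MetricSpace X] [CompactSpace X] [MeasurableSpace X] [BorelSpace X]
    (f : X → X) (hf : Continuous f) (Ψ : ℕ → X → ℝ)
    (hΨcont : ∀ n, 1 ≤ n → Continuous (Ψ n))
    (hsuper : ∀ m n, 1 ≤ m → 1 ≤ n → ∀ x, Ψ n x + Ψ m (f^[n] x) ≤ Ψ (n + m) x) :
    ∀ k : ℕ, pressure (f^[2 ^ k]) Set.univ (Ψ (2 ^ k)) / (2 ^ k : ℝ) ≤
      pressure (f^[2 ^ (k + 1)]) Set.univ (Ψ (2 ^ (k + 1))) / (2 ^ (k + 1) : ℝ) := by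
  intro k
  have key : pressure (f^[2^k]) Set.univ (Ψ (2^k)) ≤
      pressure (f^[2^(k+1)]) Set.univ (Ψ (2^(k+1))) / 2 := by
    apply pressure_double (f^[2^k]) (f^[2^(k+1)]) (hf.iterate _) _ _ _
      (hΨcont _ Nat.one_le_two_pow) (hΨcont _ Nat.one_le_two_pow)
    · intro x
      have h1 := hsuper (2^k) (2^k) Nat.one_le_two_pow Nat.one_le_two_pow x
      rw [show (2:ℕ)^k + 2^k = 2^(k+1) by rw [pow_succ]; ring] at h1
      exact h1
    · intro i x
      rw [← Function.iterate_mul, ← Function.iterate_mul]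
      rw [show 2^(k+1) * i = 2^k * (2*i) by rw [pow_succ]; ring]
  have h2k : (0:ℝ) < 2^k := by positivity
  rw [show ((2:ℝ)^(k+1)) = 2 * 2^k by rw [pow_succ]; ring, ← div_div]
  exact (div_le_div_iff_of_pos_right h2k).2 key
end

section
/- Let f be a C^{1+γ} expanding map with repeller Λ, μ an f-invariant ergodic measure on Λ, f̂: M̂ → M̂ the inverse limit of f with projection π₀ and ergodic lift μ̂ supported on Λ̂. Given numbers ε > 0 and δ > 0, a set Λ_{K₁} ⊂ Λ̂ with μ̂(Λ_{K₁}) > 1 − δ, and a finite measurable partition 𝒫 of M each of whose elements P satisfies μ̂(Λ_{K₁} ∩ π₀⁻¹P) > 0, there exist a positive integer N₂ = N₂(ε,δ) and a compact subset Λ₂' ⊂ Λ_{K₁} with μ̂(Λ₂') > 1 − 2δ such that for every x̂ ∈ Λ₂' and every n ≥ N₂ there is an integer k ∈ [n, n+εn) with π₀ f̂^k(x̂) ∈ 𝒫(π₀(x̂)) and f̂^k(x̂) ∈ Λ_{K₁}. -/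
open MeasureTheory Filter Topology Set

section ManifoldDefs

variable {M : Type*} [NormedAddCommGroup M] [InnerProductSpace ℝ M] [FiniteDimensional ℝ M]

/-- The `i`-th largest singular value (for `i ≥ 1`) of a linear operator on a
finite-dimensional real inner product space, via the Courant–Fischer min-max principle. -/
noncomputable def singVal (L : M →L[ℝ] M) (i : ℕ) : ℝ :=
  sSup {r : ℝ | ∃ V : Submodule ℝ M, Module.finrank ℝ V = i ∧ ∀ v ∈ V, r * ‖v‖ ≤ ‖L v‖}

/-- `ψ^s(L) = ∑_{i=1}^{[s]} log α_i(L) + (s − [s]) log α_{[s]+1}(L)`. -/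
noncomputable def psiSing (L : M →L[ℝ] M) (s : ℝ) : ℝ :=
  (∑ i ∈ Finset.range ⌊s⌋₊, Real.log (singVal L (i + 1)))
    + (s - ⌊s⌋₊) * Real.log (singVal L (⌊s⌋₊ + 1))

/-- `φ^t(L) = ∑_{i=m₀−[t]+1}^{m₀} log α_i(L) + (t − [t]) log α_{m₀−[t]}(L)`. -/
noncomputable def phiSing (m₀ : ℕ) (L : M →L[ℝ] M) (t : ℝ) : ℝ :=
  (∑ i ∈ Finset.Icc (m₀ - ⌊t⌋₊ + 1) m₀, Real.log (singVal L i))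
    + (t - ⌊t⌋₊) * Real.log (singVal L (m₀ - ⌊t⌋₊))

/-- `Λ` is a repeller for the expanding map `f`, with isolating neighborhood `U` and
expansion constant `κ`. -/
structure IsExpandingRepeller (f : M → M) (Λ U : Set M) (κ : ℝ) : Prop where
  compact : IsCompact Λ
  invariant : f '' Λ = Λ
  openU : IsOpen U
  isolated : Λ = {x ∈ U | ∀ n : ℕ, f^[n] x ∈ U}
  one_lt : 1 < κ
  expanding : ∀ x ∈ Λ, ∀ v : M, κ * ‖v‖ ≤ ‖fderiv ℝ f x v‖

/-- `f` is of class `C^{1+γ}`: it is `C¹` and its differential is `γ`-Hölder. -/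
def IsC1Holder (f : M → M) (γ : ℝ) : Prop :=
  ContDiff ℝ 1 f ∧ ∃ K : ℝ, 0 ≤ K ∧ ∀ x y : M, ‖fderiv ℝ f x - fderiv ℝ f y‖ ≤ K * ‖x - y‖ ^ γ

/-- `f` restricted to `Λ` is topologically transitive. -/
def TopTransOn (f : M → M) (Λ : Set M) : Prop :=
  ∀ V W : Set M, IsOpen V → IsOpen W → (V ∩ Λ).Nonempty → (W ∩ Λ).Nonempty →
    ∃ n : ℕ, (f^[n] '' (V ∩ Λ) ∩ W).Nonempty


end ManifoldDefs

section InvLim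

variable {M : Type*} [NormedAddCommGroup M] [InnerProductSpace ℝ M] [FiniteDimensional ℝ M]

/-- The inverse limit (natural extension) `M̂` of `f : M → M`:
sequences `{x_n}_{n ∈ ℤ}` with `x_n = f(x_{n+1})`. -/
abbrev InvLimit (f : M → M) : Type _ := {x : ℤ → M // ∀ n : ℤ, x n = f (x (n + 1))}

/-- The lift `f̂` of `f` to the inverse limit `M̂`. -/
def fhat (f : M → M) : InvLimit f → InvLimit f :=
  fun x => ⟨fun n => f (x.1 n), fun n => congrArg f (x.2 n)⟩

/-- `P` is a genuine finite measurable partition of `M`. -/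
def IsFinPartition [MeasurableSpace M] (P : Finset (Set M)) : Prop :=
  (∀ A ∈ P, MeasurableSet A) ∧ (⋃ A ∈ P, A) = Set.univ ∧
    ∀ A ∈ P, ∀ B ∈ P, A ≠ B → A ∩ B = ∅

end InvLim

/-!
For `μ̂`-a.e. `x̂` and every `P ∈ 𝒫`, Birkhoff's ergodic theorem (a consequence of the maximal
ergodic theorem) says the orbit of `x̂` visits `B_P = Λ_{K₁} ∩ π₀⁻¹ P` with frequency
`μ̂(B_P) > 0`. Comparing the visit counts up to `n` and up to `n + εn/2` then shows that, for
large `n`, some `f̂^k x̂` with `k ∈ [n, n + εn)` lies in `B_P`. By continuity of measure the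
threshold for `n` is uniform on a subset of `Λ_{K₁}` of measure `> 1 − 2δ`, and inner regularity
shrinks it to a closed, hence compact, subset of the compact set `Λ̂`.
-/

section BirkhoffMax

variable {X : Type*} {T : X → X} {h : X → ℝ}

noncomputable def birkhoffMax (T : X → X) (h : X → ℝ) (N : ℕ) : X → ℝ :=
  (Finset.range (N + 1)).sup' Finset.nonempty_range_add_one (birkhoffSum T h)

lemma birkhoffMax_apply (N : ℕ) (x : X) :
    birkhoffMax T h N x =
      (Finset.range (N + 1)).sup' Finset.nonempty_range_add_one (birkhoffSum T h · x) :=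
  Finset.sup'_apply _ _ _

lemma birkhoffSum_le_birkhoffMax {n N : ℕ} (hn : n ≤ N) (x : X) :
    birkhoffSum T h n x ≤ birkhoffMax T h N x := by
  rw [birkhoffMax_apply]
  exact Finset.le_sup' (birkhoffSum T h · x) (Finset.mem_range_succ_iff.2 hn)

lemma birkhoffMax_nonneg (N : ℕ) (x : X) : 0 ≤ birkhoffMax T h N x :=
  (birkhoffSum_zero T h x).symm.le.trans (birkhoffSum_le_birkhoffMax N.zero_le x)

lemma birkhoffMax_mono (x : X) : Monotone (birkhoffMax T h · x) := fun _ _ hNN' => by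
  simp only [birkhoffMax_apply]
  exact Finset.sup'_mono _ (Finset.range_subset_range.2 (Nat.succ_le_succ hNN')) _

lemma birkhoffMax_le_max (N : ℕ) (x : X) :
    birkhoffMax T h N x ≤ max 0 (h x + birkhoffMax T h N (T x)) := by
  rw [birkhoffMax_apply, Finset.sup'_le_iff]
  rintro (_ | n) hn
  · simp
  · rw [birkhoffSum_succ']
    exact le_max_of_le_right (add_le_add_right
      (birkhoffSum_le_birkhoffMax (by have := Finset.mem_range.1 hn; omega) _) _)

variable [MeasurableSpace X] {μ : Measure X}

lemma measurable_birkhoffSum (hT : Measurable T) (hh : Measurable h) (n : ℕ) :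
    Measurable (birkhoffSum T h n) :=
  Finset.measurable_sum _ fun k _ => hh.comp (hT.iterate k)

lemma measurable_birkhoffMax (hT : Measurable T) (hh : Measurable h) (N : ℕ) :
    Measurable (birkhoffMax T h N) :=
  Finset.measurable_range_sup' fun n _ => measurable_birkhoffSum hT hh n

lemma integrable_birkhoffSum (hT : MeasurePreserving T μ μ) (hh : Integrable h μ) (n : ℕ) :
    Integrable (birkhoffSum T h n) μ :=
  integrable_finsetSum _ fun k _ => (hT.iterate k).integrable_comp_of_integrable hh

lemma integrable_birkhoffMax (hT : MeasurePreserving T μ μ) (hh : Integrable h μ) (N : ℕ) :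
    Integrable (birkhoffMax T h N) μ :=
  Finset.sup'_induction (p := (Integrable · μ)) _ _ (fun _ hf _ hg => hf.sup hg)
    fun n _ => integrable_birkhoffSum hT hh n

/-- Hopf's maximal ergodic theorem. -/
theorem setIntegral_birkhoffMax_pos_nonneg (hT : MeasurePreserving T μ μ) (hm : Measurable h)
    (hh : Integrable h μ) (N : ℕ) :
    0 ≤ ∫ x in {x | 0 < birkhoffMax T h N x}, h x ∂μ := by
  set M := birkhoffMax T h N
  set F := {x | 0 < M x}
  have hF : MeasurableSet F :=
    measurableSet_lt measurable_const (measurable_birkhoffMax hT.measurable hm N)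
  have hM : Integrable M μ := integrable_birkhoffMax hT hh N
  have hMT : Integrable (M ∘ T) μ := hT.integrable_comp_of_integrable hM
  have hu : Integrable (M - M ∘ T) μ := hM.sub hMT
  have hu_on : ∀ x ∈ F, (M - M ∘ T) x ≤ h x := fun x hx => by
    have := birkhoffMax_le_max (T := T) (h := h) N x
    simp only [Pi.sub_apply, Function.comp_apply]
    linarith [le_max_iff.1 this |>.resolve_left (not_le.2 hx)]
  have hu_off : ∀ x ∈ Fᶜ, (M - M ∘ T) x ≤ 0 := fun x hx => by
    have := birkhoffMax_nonneg (T := T) (h := h) N (T x)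
    simp only [Pi.sub_apply, Function.comp_apply]
    linarith [not_lt.1 (Set.notMem_ofPred_iff.1 hx)]
  have hu_int : ∫ x, (M - M ∘ T) x ∂μ = 0 := by
    rw [integral_sub' hM hMT, sub_eq_zero]
    conv_lhs => rw [← hT.map_eq]
    exact integral_map hT.measurable.aemeasurable (by rw [hT.map_eq]; exact hM.1)
  calc 0 = ∫ x in F, (M - M ∘ T) x ∂μ + ∫ x in Fᶜ, (M - M ∘ T) x ∂μ := by
        rw [integral_add_compl hF hu, hu_int]
    _ ≤ ∫ x in F, (M - M ∘ T) x ∂μ := add_le_of_nonpos_right (setIntegral_nonpos hF.compl hu_off)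
    _ ≤ ∫ x in F, h x ∂μ := setIntegral_mono_on hu.integrableOn hh.integrableOn hF hu_on

end BirkhoffMax

section PointwiseErgodic

variable {X : Type*} {T : X → X} {g h : X → ℝ}

lemma bddAbove_range_birkhoffSum_apply_iff (x : X) :
    BddAbove (range fun n => birkhoffSum T h n (T x)) ↔
      BddAbove (range fun n => birkhoffSum T h n x) := by
  simp only [bddAbove_def, forall_mem_range]
  constructor
  · rintro ⟨C, hC⟩
    refine ⟨max 0 (h x + C), fun n => ?_⟩
    cases n with
    | zero => simp
    | succ n => exact le_max_of_le_right (by rw [birkhoffSum_succ']; linarith [hC n])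
  · rintro ⟨C, hC⟩
    exact ⟨C - h x, fun n => by linarith [hC (n + 1), birkhoffSum_succ' T h n x]⟩

variable [MeasurableSpace X] {μ : Measure X}

/-- The unboundedness of `n ↦ S_n h x` is a `T`-invariant event, so ergodicity makes it null or
conull; the maximal ergodic theorem rules out the second case when `∫ h < 0`. -/
theorem Ergodic.ae_bddAbove_birkhoffSum (hT : Ergodic T μ) (hm : Measurable h)
    (hh : Integrable h μ) (hneg : ∫ x, h x ∂μ < 0) :
    ∀ᵐ x ∂μ, BddAbove (range fun n => birkhoffSum T h n x) := by
  set A := {x | BddAbove (range fun n => birkhoffSum T h n x)}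
  have hA : MeasurableSet A :=
    measurableSet_bddAbove_range fun n => measurable_birkhoffSum hT.measurable hm n
  have hAinv : T ⁻¹' A = A := Set.ext bddAbove_range_birkhoffSum_apply_iff
  rcases hT.measure_self_or_compl_eq_zero hA hAinv with hA0 | hAc0
  · exfalso
    set F := fun N => {x | 0 < birkhoffMax T h N x}
    have hF : ∀ N, MeasurableSet (F N) := fun N =>
      measurableSet_lt measurable_const (measurable_birkhoffMax hT.measurable hm N)
    have hFmono : Monotone F := fun N N' hNN' x (hx : 0 < _) =>
      hx.trans_le (birkhoffMax_mono x hNN')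
    have hAF : Aᶜ ⊆ ⋃ N, F N := fun x hx => by
      obtain ⟨N, hN⟩ : ∃ N, 0 < birkhoffSum T h N x := by
        by_contra! hle
        exact hx ⟨0, forall_mem_range.2 hle⟩
      exact mem_iUnion.2 ⟨N, hN.trans_le (birkhoffSum_le_birkhoffMax le_rfl x)⟩
    have hFμ : μ.restrict (⋃ N, F N) = μ :=
      Measure.restrict_eq_self_of_ae_mem (measure_mono_null (compl_subset_compl.2 hAF)
        (by rwa [compl_compl]))
    have hlim := tendsto_setIntegral_of_monotone hF hFmono hh.integrableOn
    rw [hFμ] at hlim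
    exact hneg.not_ge (ge_of_tendsto' hlim fun N =>
      setIntegral_birkhoffMax_pos_nonneg hT.toMeasurePreserving hm hh N)
  · exact measure_eq_zero_iff_ae_notMem.1 hAc0 |>.mono fun x hx => not_not.1 hx

theorem Ergodic.ae_eventually_birkhoffAverage_lt [IsProbabilityMeasure μ] (hT : Ergodic T μ)
    (hm : Measurable g) (hg : Integrable g μ) {β : ℝ} (hβ : ∫ x, g x ∂μ < β) :
    ∀ᵐ x ∂μ, ∀ᶠ n in atTop, birkhoffAverage ℝ T g n x < β := by
  obtain ⟨α, hgα, hαβ⟩ := exists_between hβ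
  have hbdd := hT.ae_bddAbove_birkhoffSum (h := g - fun _ => α) (hm.sub measurable_const)
    (hg.sub (integrable_const α)) (by
      rw [integral_sub' hg (integrable_const α)]
      simpa using hgα)
  filter_upwards [hbdd] with x ⟨C, hC⟩
  have hsum : ∀ n : ℕ, birkhoffSum T g n x = birkhoffSum T (g - fun _ => α) n x + n * α := by
    intro n
    rw [birkhoffSum_sub, birkhoffSum_of_comp_eq (φ := fun _ => α) rfl]
    simp
  filter_upwards [(tendsto_const_div_atTop_nhds_zero_nat C).eventually
    (gt_mem_nhds (sub_pos.2 hαβ)), eventually_gt_atTop 0] with n hCn hn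
  have hn' : (0 : ℝ) < n := Nat.cast_pos.2 hn
  have hSn := hC (mem_range_self n)
  rw [birkhoffAverage, hsum, smul_eq_mul, inv_mul_eq_div, add_div, mul_div_cancel_left₀ _ hn'.ne']
  linarith [div_le_div_of_nonneg_right hSn hn'.le]

theorem Ergodic.ae_eventually_lt_birkhoffAverage [IsProbabilityMeasure μ] (hT : Ergodic T μ)
    (hm : Measurable g) (hg : Integrable g μ) {β : ℝ} (hβ : β < ∫ x, g x ∂μ) :
    ∀ᵐ x ∂μ, ∀ᶠ n in atTop, β < birkhoffAverage ℝ T g n x := by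
  have := hT.ae_eventually_birkhoffAverage_lt hm.neg hg.neg (β := -β)
    (by simpa [integral_neg] using hβ)
  filter_upwards [this] with x hx
  filter_upwards [hx] with n hn
  rw [birkhoffAverage_neg] at hn
  exact neg_lt_neg_iff.1 hn

theorem Ergodic.ae_tendsto_birkhoffAverage_of_measurable [IsProbabilityMeasure μ]
    (hT : Ergodic T μ) (hm : Measurable g) (hg : Integrable g μ) :
    ∀ᵐ x ∂μ, Tendsto (birkhoffAverage ℝ T g · x) atTop (𝓝 (∫ x, g x ∂μ)) := by
  have hup : ∀ᵐ x ∂μ, ∀ q : ℚ, ∫ x, g x ∂μ < q → ∀ᶠ n in atTop, birkhoffAverage ℝ T g n x < q :=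
    ae_all_iff.2 fun q => by
      by_cases hq : ∫ x, g x ∂μ < q
      · filter_upwards [hT.ae_eventually_birkhoffAverage_lt hm hg hq] with x hx using fun _ => hx
      · exact ae_of_all _ fun _ h => absurd h hq
  have hlow : ∀ᵐ x ∂μ, ∀ q : ℚ, q < ∫ x, g x ∂μ → ∀ᶠ n in atTop, q < birkhoffAverage ℝ T g n x :=
    ae_all_iff.2 fun q => by
      by_cases hq : q < ∫ x, g x ∂μ
      · filter_upwards [hT.ae_eventually_lt_birkhoffAverage hm hg hq] with x hx using fun _ => hx
      · exact ae_of_all _ fun _ h => absurd h hq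
  filter_upwards [hup, hlow] with x hux hlx
  refine tendsto_order.2 ⟨fun a ha => ?_, fun b hb => ?_⟩
  · obtain ⟨q, haq, hq⟩ := exists_rat_btwn ha
    exact (hlx q hq).mono fun n hn => haq.trans hn
  · obtain ⟨q, hq, hqb⟩ := exists_rat_btwn hb
    exact (hux q hq).mono fun n hn => hn.trans hqb

/-- Birkhoff's pointwise ergodic theorem. -/
theorem Ergodic.ae_tendsto_birkhoffAverage [IsProbabilityMeasure μ] (hT : Ergodic T μ)
    (hg : Integrable g μ) :
    ∀ᵐ x ∂μ, Tendsto (birkhoffAverage ℝ T g · x) atTop (𝓝 (∫ x, g x ∂μ)) := by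
  have hgg' := hg.aemeasurable.ae_eq_mk
  have heq := ae_all_iff.2
    (hT.quasiMeasurePreserving.birkhoffAverage_ae_eq_of_ae_eq ℝ hgg')
  filter_upwards [hT.ae_tendsto_birkhoffAverage_of_measurable hg.aemeasurable.measurable_mk
    ((integrable_congr hgg').1 hg), heq] with x hx hxeq
  rw [integral_congr_ae hgg']
  simpa [hxeq] using hx

end PointwiseErgodic

section ReturnTimes

variable {X : Type*} {T : X → X} {B : Set X} {x : X}

lemma exists_iterate_mem_Ico_of_birkhoffSum_lt {n m : ℕ} (hnm : n ≤ m)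
    (h : birkhoffSum T (B.indicator (1 : X → ℝ)) n x < birkhoffSum T (B.indicator 1) m x) :
    ∃ k ∈ Finset.Ico n m, T^[k] x ∈ B := by
  by_contra! hk
  have hzero : ∑ k ∈ Finset.Ico n m, B.indicator (1 : X → ℝ) (T^[k] x) = 0 :=
    Finset.sum_eq_zero fun k hk' => indicator_of_notMem (hk k hk') _
  rw [Finset.sum_Ico_eq_sub _ hnm] at hzero
  simp only [birkhoffSum] at h
  linarith

lemma birkhoffSum_eq_mul_birkhoffAverage {g : X → ℝ} {n : ℕ} (hn : n ≠ 0) :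
    birkhoffSum T g n x = n * birkhoffAverage ℝ T g n x := by
  rw [birkhoffAverage, smul_eq_mul, mul_inv_cancel_left₀ (Nat.cast_ne_zero.2 hn)]

/-- If the orbit of `x` visits `B` with positive frequency `c`, then for large `n` it visits `B`
in every window `[n, n + εn)`: compare the Birkhoff sums at `n` and at `m ≈ n + εn/2`. -/
lemma eventually_exists_iterate_mem_of_tendsto_birkhoffAverage {c ε : ℝ} (hc : 0 < c)
    (hε : 0 < ε) (hx : Tendsto (birkhoffAverage ℝ T (B.indicator 1) · x) atTop (𝓝 c)) :
    ∀ᶠ n : ℕ in atTop, ∃ k, n ≤ k ∧ (k : ℝ) < n + ε * n ∧ T^[k] x ∈ B := by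
  set θ := c * ε / (4 + 2 * ε)
  have hθ : 0 < θ := by positivity
  have hθε : θ * (2 + ε) = c * ε / 2 := by simp only [θ]; field_simp; ring
  obtain ⟨N, hN⟩ := Metric.tendsto_atTop.1 hx θ hθ
  filter_upwards [eventually_ge_atTop N, eventually_gt_atTop ⌈2 / ε⌉₊] with n hnN hnε
  have hεn : 2 < ε * n := by
    have := Nat.lt_of_ceil_lt hnε
    rwa [div_lt_iff₀ hε, mul_comm] at this
  set m := ⌈n + ε * n / 2⌉₊
  have hm_ge : n + ε * n / 2 ≤ m := Nat.le_ceil _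
  have hm_lt : (m : ℝ) < n + ε * n / 2 + 1 := Nat.ceil_lt_add_one (by positivity)
  have hnm : n ≤ m := by exact_mod_cast (by linarith : (n : ℝ) ≤ m)
  have hn0 : n ≠ 0 := ((Nat.zero_le _).trans_lt hnε).ne'
  have hm0 : m ≠ 0 := by omega
  have hn' : (0 : ℝ) < n := by positivity
  have hn := abs_lt.1 (hN n hnN)
  have hm := abs_lt.1 (hN m (hnN.trans hnm))
  have hθmn : θ * (m + n) < c * (m - n) :=
    calc θ * (m + n) < θ * ((2 + ε) * n) := by gcongr; linarith
      _ = c * (ε * n / 2) := by rw [← mul_assoc, hθε]; ring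
      _ ≤ c * (m - n) := by gcongr; linarith
  obtain ⟨k, hk, hkB⟩ := exists_iterate_mem_Ico_of_birkhoffSum_lt hnm (by
    rw [birkhoffSum_eq_mul_birkhoffAverage hn0, birkhoffSum_eq_mul_birkhoffAverage hm0]
    calc n * birkhoffAverage ℝ T (B.indicator 1) n x < n * (c + θ) := by gcongr; linarith
      _ ≤ m * (c - θ) := by linarith
      _ < m * birkhoffAverage ℝ T (B.indicator 1) m x := by gcongr; linarith)
  obtain ⟨hnk, hkm⟩ := Finset.mem_Ico.1 hk
  exact ⟨k, hnk, by linarith [(Nat.cast_lt (α := ℝ)).2 hkm], hkB⟩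

end ReturnTimes

theorem exists_isCompact_subset_forall_ge {α : Type*} [TopologicalSpace α]
    [TopologicalSpace.PseudoMetrizableSpace α] [MeasurableSpace α] [BorelSpace α]
    {μ : Measure α} [IsFiniteMeasure μ] {p : ℕ → α → Prop}
    (hp : ∀ n, MeasurableSet {x | p n x}) (hae : ∀ᵐ x ∂μ, ∀ᶠ n in atTop, p n x)
    {E K : Set α} (hE : MeasurableSet E) (hK : IsCompact K) (hEK : E ⊆ K)
    {r : ENNReal} (hr : r < μ E) :
    ∃ F ⊆ E, IsCompact F ∧ r < μ F ∧ ∃ N, ∀ x ∈ F, ∀ n ≥ N, p n x := by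
  set G := fun N => {x | ∀ n ≥ N, p n x}
  have hG : ∀ N, MeasurableSet (G N) := fun N => by
    simp only [G, ofPred_forall]
    exact .iInter fun n => .iInter fun _ => hp n
  have hGμ : μ (E ∩ ⋃ N, G N) = μ E := measure_inter_conull (ae_iff.1 <|
    hae.mono fun x hx => mem_iUnion.2 (eventually_atTop.1 hx))
  have hmono : Monotone fun N => E ∩ G N :=
    fun N N' hNN' x hx => ⟨hx.1, fun n hn => hx.2 n (hNN'.trans hn)⟩
  have hlim := tendsto_measure_iUnion_atTop (μ := μ) hmono
  rw [← inter_iUnion, hGμ] at hlim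
  obtain ⟨N, hN⟩ := (hlim.eventually (lt_mem_nhds hr)).exists
  obtain ⟨F, hFD, hFc, hrF⟩ :=
    (hE.inter (hG N)).exists_lt_isClosed_of_ne_top (measure_ne_top _ _) hN
  exact ⟨F, hFD.trans inter_subset_left,
    hK.of_isClosed_subset hFc (hFD.trans (inter_subset_left.trans hEK)), hrF,
    N, fun x hx => (hFD hx).2⟩

section InverseLimit

variable {M : Type*} {f : M → M}

instance InvLimit.instPseudoMetrizableSpace [PseudoMetricSpace M] :
    TopologicalSpace.PseudoMetrizableSpace (InvLimit f) :=
  Topology.IsInducing.subtypeVal.pseudoMetrizableSpace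

lemma measurable_fhat [MeasurableSpace M] (hf : Measurable f) : Measurable (fhat f) :=
  (measurable_pi_lambda _ fun n =>
    hf.comp ((measurable_pi_apply n).comp measurable_subtype_coe)).subtype_mk

lemma isCompact_setOf_forall_mem [TopologicalSpace M] [T2Space M] (hf : Continuous f) {Λ : Set M}
    (hΛ : IsCompact Λ) : IsCompact {x : InvLimit f | ∀ n, x.1 n ∈ Λ} := by
  rw [Topology.IsEmbedding.subtypeVal.isCompact_iff]
  have himage : Subtype.val '' {x : InvLimit f | ∀ n, x.1 n ∈ Λ} =
      (univ.pi fun _ => Λ) ∩ ⋂ n, {y : ℤ → M | y n = f (y (n + 1))} := by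
    ext y
    simp only [mem_image, mem_inter_iff, mem_univ_pi, mem_iInter]
    exact ⟨fun ⟨x, hx, hxy⟩ => hxy ▸ ⟨hx, x.2⟩, fun ⟨hy, hy'⟩ => ⟨⟨y, hy'⟩, hy, rfl⟩⟩
  rw [himage]
  exact (isCompact_univ_pi fun _ => hΛ).inter_right <| isClosed_iInter fun n =>
    isClosed_eq (continuous_apply n) (hf.comp (continuous_apply (n + 1)))

end InverseLimit

theorem stmt15_general {M : Type*} [NormedAddCommGroup M] [InnerProductSpace ℝ M]
    [FiniteDimensional ℝ M] [MeasurableSpace M] [BorelSpace M]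
    (f : M → M) (γ : ℝ) (hf : IsC1Holder f γ)
    (Λ U : Set M) (κ : ℝ) (hrep : IsExpandingRepeller f Λ U κ)
    (μhat : Measure (InvLimit f)) (hhatprob : IsProbabilityMeasure μhat)
    (hhaterg : Ergodic (fhat f) μhat)
    (ε δ : ℝ) (hε : 0 < ε) (hδ : 0 < δ)
    (ΛK : Set (InvLimit f)) (hΛKmeas : MeasurableSet ΛK)
    (hΛKsub : ΛK ⊆ {x : InvLimit f | ∀ n : ℤ, x.1 n ∈ Λ})
    (hΛKbig : ENNReal.ofReal (1 - δ) < μhat ΛK)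
    (P : Finset (Set M)) (hP : IsFinPartition (M := M) P)
    (hpos : ∀ A ∈ P, 0 < μhat (ΛK ∩ (fun x : InvLimit f => x.1 0) ⁻¹' A)) :
    ∃ N₂ : ℕ, 0 < N₂ ∧ ∃ Λ₂' : Set (InvLimit f), Λ₂' ⊆ ΛK ∧ IsCompact Λ₂' ∧
      ENNReal.ofReal (1 - 2 * δ) < μhat Λ₂' ∧
      ∀ x ∈ Λ₂', ∀ n : ℕ, N₂ ≤ n → ∃ k : ℕ, n ≤ k ∧ (k : ℝ) < n + ε * n ∧
        (∃ A ∈ P, x.1 0 ∈ A ∧ ((fhat f)^[k] x).1 0 ∈ A) ∧ (fhat f)^[k] x ∈ ΛK := by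
  set B := fun A => ΛK ∩ (fun x : InvLimit f => x.1 0) ⁻¹' A
  have hB : ∀ A ∈ P, MeasurableSet (B A) := fun A hA =>
    hΛKmeas.inter ((measurable_pi_apply 0).comp measurable_subtype_coe (hP.1 A hA))
  have hwindow : ∀ᵐ x ∂μhat, ∀ᶠ n : ℕ in atTop, ∀ A ∈ P,
      ∃ k : ℕ, n ≤ k ∧ (k : ℝ) < n + ε * n ∧ (fhat f)^[k] x ∈ B A := by
    refine ((eventually_all_finset P).2 fun A hA => ?_).mono fun x hx =>
      (eventually_all_finset P).2 hx
    have hint : Integrable ((B A).indicator 1) μhat :=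
      (integrable_const (1 : ℝ)).indicator (hB A hA)
    filter_upwards [hhaterg.ae_tendsto_birkhoffAverage hint] with x hx
    rw [integral_indicator_one (hB A hA)] at hx
    exact eventually_exists_iterate_mem_of_tendsto_birkhoffAverage
      (ENNReal.toReal_pos (hpos A hA).ne' (measure_ne_top _ _)) hε hx
  have hwindow_meas : ∀ n : ℕ, MeasurableSet {x | ∀ A ∈ P,
      ∃ k : ℕ, n ≤ k ∧ (k : ℝ) < n + ε * n ∧ (fhat f)^[k] x ∈ B A} := fun n => by
    simp only [ofPred_forall, ofPred_exists, ofPred_and]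
    exact Finset.measurableSet_biInter _ fun A hA => .iUnion fun k =>
      (MeasurableSet.const _).inter <| (MeasurableSet.const _).inter <|
        (measurable_fhat hf.1.continuous.measurable).iterate k (hB A hA)
  obtain ⟨F, hFK, hFc, hFμ, N, hN⟩ := exists_isCompact_subset_forall_ge hwindow_meas hwindow
    hΛKmeas (isCompact_setOf_forall_mem hf.1.continuous hrep.compact) hΛKsub
    ((ENNReal.ofReal_le_ofReal (show 1 - 2 * δ ≤ 1 - δ by linarith)).trans_lt hΛKbig)
  refine ⟨N + 1, N.succ_pos, F, hFK, hFc, hFμ, fun x hx n hn => ?_⟩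
  obtain ⟨A, hA, hxA⟩ : ∃ A ∈ P, x.1 0 ∈ A := by
    simpa using hP.2.1.ge (mem_univ (x.1 0))
  obtain ⟨k, hnk, hk, hkK, hkA⟩ := hN x hx n (by omega) A hA
  exact ⟨k, hnk, hk, ⟨A, hA, hxA, hkA⟩, hkK⟩

/-- Let `f` be a `C^{1+γ}` expanding map with repeller `Λ`, `μ` an ergodic
invariant measure on `Λ`, `f̂ : M̂ → M̂` the inverse limit of `f` with projection `π₀` and
ergodic lift `μ̂` supported on `Λ̂`. Given `ε, δ > 0`, a set `Λ_{K₁} ⊆ Λ̂` with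
`μ̂(Λ_{K₁}) > 1 − δ`, and a finite measurable partition `𝒫` of `M` each of whose elements
`P` satisfies `μ̂(Λ_{K₁} ∩ π₀⁻¹ P) > 0`, there exist a positive integer `N₂` and a compact
subset `Λ₂' ⊆ Λ_{K₁}` with `μ̂(Λ₂') > 1 − 2δ` such that for every `x̂ ∈ Λ₂'` and `n ≥ N₂`
there is `k ∈ [n, n + εn)` with `π₀ f̂^k(x̂) ∈ 𝒫(π₀(x̂))` and `f̂^k(x̂) ∈ Λ_{K₁}`. -/
theorem stmt15 {M : Type*} [NormedAddCommGroup M] [InnerProductSpace ℝ M]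
    [FiniteDimensional ℝ M] [MeasurableSpace M] [BorelSpace M]
    (f : M → M) (γ : ℝ) (hγ : 0 < γ) (hf : IsC1Holder f γ)
    (Λ U : Set M) (κ : ℝ) (hrep : IsExpandingRepeller f Λ U κ)
    (μ : Measure M) (hμprob : IsProbabilityMeasure μ) (hμerg : Ergodic f μ) (hμΛ : μ Λ = 1)
    (μhat : Measure (InvLimit f)) (hhatprob : IsProbabilityMeasure μhat)
    (hhaterg : Ergodic (fhat f) μhat)
    (hproj : μhat.map (fun x : InvLimit f => x.1 0) = μ)
    (hhatsupp : μhat {x : InvLimit f | ∀ n : ℤ, x.1 n ∈ Λ} = 1)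
    (ε δ : ℝ) (hε : 0 < ε) (hδ : 0 < δ)
    (ΛK : Set (InvLimit f)) (hΛKmeas : MeasurableSet ΛK)
    (hΛKsub : ΛK ⊆ {x : InvLimit f | ∀ n : ℤ, x.1 n ∈ Λ})
    (hΛKbig : ENNReal.ofReal (1 - δ) < μhat ΛK)
    (P : Finset (Set M)) (hP : IsFinPartition (M := M) P)
    (hpos : ∀ A ∈ P, 0 < μhat (ΛK ∩ (fun x : InvLimit f => x.1 0) ⁻¹' A)) :
    ∃ N₂ : ℕ, 0 < N₂ ∧ ∃ Λ₂' : Set (InvLimit f), Λ₂' ⊆ ΛK ∧ IsCompact Λ₂' ∧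
      ENNReal.ofReal (1 - 2 * δ) < μhat Λ₂' ∧
      ∀ x ∈ Λ₂', ∀ n : ℕ, N₂ ≤ n → ∃ k : ℕ, n ≤ k ∧ (k : ℝ) < n + ε * n ∧
        (∃ A ∈ P, x.1 0 ∈ A ∧ ((fhat f)^[k] x).1 0 ∈ A) ∧ (fhat f)^[k] x ∈ ΛK :=
  stmt15_general f γ hf Λ U κ hrep μhat hhatprob hhaterg ε δ hε hδ ΛK hΛKmeas hΛKsub hΛKbig P hP
    hpos
end
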